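/- arXiv:2003.14028 — 3 statements merged into one kernel-verified Lean document; each statement's English description precedes it below -/
import Mathlib

section
/- Let A̅ be the 2×2 block matrix [[(1 - w_s n1 - w_d n2) I_{r1} + w_s J_{r1,r1}, w_d J_{r1,r2}],[w_d J_{r2,r1}, (1 - w_s n2 - w_d n1) I_{r2} + w_s J_{r2,r2}]], where J_{p,q} is the p×q all-ones matrix, r1 ≤ n1, r2 ≤ n2, r1 + r2 < n1 + n2, r1, r2 ≥ 1, and w_s, w_d > 0 with w_s(n1² + n2²) + 2 w_d n1 n2 = 1. Then every entry of A̅ is nonnegative and every row sum of A̅ is at most 1, i.e. A̅ is substochastic; moreover at least one row sum is strictly less than 1. -/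
open Matrix BigOperators

/-!
Row `k` of `A̅` sums to `1 - ws * s - wd * s'`, where `s` and `s'` count the stubborn agents
of its own and of the other community; as some community has a stubborn agent, every row sum
is `< 1`. The diagonal entries are nonnegative because the normalization dominates
`ws * n1 + wd * n2` (resp. `ws * n2 + wd * n1`) as soon as that community is nonempty.
-/

/-- The expected regular-agent update matrix `A̅` of the two-community block gossip model,
acting on the `r1 + r2` regular agents. -/
def Abar (n1 n2 r1 r2 : ℕ) (ws wd : ℝ) :
    Matrix (Fin (r1 + r2)) (Fin (r1 + r2)) ℝ :=
  fun k l =>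
    if (k : ℕ) < r1 then
      if (l : ℕ) < r1 then (if k = l then 1 - ws * n1 - wd * n2 else 0) + ws
      else wd
    else
      if (l : ℕ) < r1 then wd
      else (if k = l then 1 - ws * n2 - wd * n1 else 0) + ws

/-- Compare termwise: `n1 ≤ n1 ^ 2` and `n2 ≤ 2 * n1 * n2`. -/
lemma mul_add_mul_le_one_of_sq_add_sq {n1 n2 : ℕ} (hn1 : 1 ≤ n1) {ws wd : ℝ}
    (hws : 0 ≤ ws) (hwd : 0 ≤ wd)
    (hnorm : ws * ((n1 : ℝ) ^ 2 + (n2 : ℝ) ^ 2) + 2 * wd * n1 * n2 = 1) :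
    ws * n1 + wd * n2 ≤ 1 := by
  have hn1' : (1 : ℝ) ≤ n1 := by exact_mod_cast hn1
  have hn2 : (0 : ℝ) ≤ n2 := n2.cast_nonneg
  nlinarith [mul_nonneg hws (mul_nonneg (sub_nonneg.2 hn1') (by linarith : (0 : ℝ) ≤ n1)),
    mul_nonneg hwd (mul_nonneg (by linarith : (0 : ℝ) ≤ 2 * n1 - 1) hn2),
    mul_nonneg hws (sq_nonneg (n2 : ℝ))]

lemma mul_add_mul_pos_of_add_pos {α : Type*} [Ring α] [LinearOrder α] [IsStrictOrderedRing α]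
    {a b x y : α} (ha : 0 < a) (hb : 0 < b) (hx : 0 ≤ x) (hy : 0 ≤ y) (hxy : 0 < x + y) :
    0 < a * x + b * y := by
  rcases hx.lt_or_eq with hx | rfl
  · exact add_pos_of_pos_of_nonneg (mul_pos ha hx) (mul_nonneg hb.le hy)
  · simpa using mul_pos hb (by simpa using hxy)

lemma Fin.sum_ite_lt_add {R : Type*} [NonAssocSemiring R] (p q : ℕ) (a b : R) :
    ∑ l : Fin (p + q), (if (l : ℕ) < p then a else b) = p * a + q * b := by
  simp [Fin.sum_univ_add, nsmul_eq_mul]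

section Abar

variable {n1 n2 r1 r2 : ℕ} {ws wd : ℝ}

lemma Abar_row_sum_of_lt (k : Fin (r1 + r2)) (hk : (k : ℕ) < r1) :
    ∑ l, Abar n1 n2 r1 r2 ws wd k l = 1 - ws * (n1 - r1) - wd * (n2 - r2) := by
  have hrow : ∀ l, Abar n1 n2 r1 r2 ws wd k l =
      (if k = l then 1 - ws * n1 - wd * n2 else 0) + (if (l : ℕ) < r1 then ws else wd) := by
    intro l
    by_cases hl : (l : ℕ) < r1
    · simp [Abar, hk, hl]
    · simp [Abar, hk, hl, show k ≠ l from fun h => hl (h ▸ hk)]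
  simp only [hrow, Finset.sum_add_distrib, Finset.sum_ite_eq, Finset.mem_univ, if_true,
    Fin.sum_ite_lt_add]
  ring

lemma Abar_row_sum_of_not_lt (k : Fin (r1 + r2)) (hk : ¬ (k : ℕ) < r1) :
    ∑ l, Abar n1 n2 r1 r2 ws wd k l = 1 - ws * (n2 - r2) - wd * (n1 - r1) := by
  have hrow : ∀ l, Abar n1 n2 r1 r2 ws wd k l =
      (if k = l then 1 - ws * n2 - wd * n1 else 0) + (if (l : ℕ) < r1 then wd else ws) := by
    intro l
    by_cases hl : (l : ℕ) < r1
    · simp [Abar, hk, hl, show k ≠ l from fun h => hk (h ▸ hl)]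
    · simp [Abar, hk, hl]
  simp only [hrow, Finset.sum_add_distrib, Finset.sum_ite_eq, Finset.mem_univ, if_true,
    Fin.sum_ite_lt_add]
  ring

lemma Abar_nonneg (h1 : r1 ≤ n1) (h2 : r2 ≤ n2) (hws : 0 ≤ ws) (hwd : 0 ≤ wd)
    (hnorm : ws * ((n1 : ℝ) ^ 2 + (n2 : ℝ) ^ 2) + 2 * wd * n1 * n2 = 1) (k l : Fin (r1 + r2)) :
    0 ≤ Abar n1 n2 r1 r2 ws wd k l := by
  have hnorm' : ws * ((n2 : ℝ) ^ 2 + (n1 : ℝ) ^ 2) + 2 * wd * n2 * n1 = 1 := by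
    linear_combination hnorm
  unfold Abar
  split_ifs
  · linarith [mul_add_mul_le_one_of_sq_add_sq (by omega) hws hwd hnorm]
  · linarith
  · exact hwd
  · exact hwd
  · linarith [mul_add_mul_le_one_of_sq_add_sq (by omega) hws hwd hnorm']
  · linarith

lemma Abar_row_sum_lt_one (h1 : r1 ≤ n1) (h2 : r2 ≤ n2) (hs : r1 + r2 < n1 + n2)
    (hws : 0 < ws) (hwd : 0 < wd) (k : Fin (r1 + r2)) :
    ∑ l, Abar n1 n2 r1 r2 ws wd k l < 1 := by
  have hg1 : (r1 : ℝ) ≤ n1 := by exact_mod_cast h1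
  have hg2 : (r2 : ℝ) ≤ n2 := by exact_mod_cast h2
  have hgs : (r1 : ℝ) + r2 < n1 + n2 := by exact_mod_cast hs
  by_cases hk : (k : ℕ) < r1
  · rw [Abar_row_sum_of_lt k hk]
    linarith [mul_add_mul_pos_of_add_pos hws hwd (sub_nonneg.2 hg1) (sub_nonneg.2 hg2)
      (by linarith)]
  · rw [Abar_row_sum_of_not_lt k hk]
    linarith [mul_add_mul_pos_of_add_pos hws hwd (sub_nonneg.2 hg2) (sub_nonneg.2 hg1)
      (by linarith)]

end Abar

theorem stmt_4_general (n1 n2 r1 r2 : ℕ) (hr1 : 1 ≤ r1)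
    (h1 : r1 ≤ n1) (h2 : r2 ≤ n2) (hs : r1 + r2 < n1 + n2)
    (ws wd : ℝ) (hws : 0 < ws) (hwd : 0 < wd)
    (hnorm : ws * ((n1 : ℝ)^2 + (n2 : ℝ)^2) + 2 * wd * n1 * n2 = 1) :
    (∀ k l, 0 ≤ Abar n1 n2 r1 r2 ws wd k l) ∧
    (∀ k, ∑ l, Abar n1 n2 r1 r2 ws wd k l ≤ 1) ∧
    (∃ k, ∑ l, Abar n1 n2 r1 r2 ws wd k l < 1) :=
  ⟨Abar_nonneg h1 h2 hws.le hwd.le hnorm,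
    fun k => (Abar_row_sum_lt_one h1 h2 hs hws hwd k).le,
    ⟨⟨0, by omega⟩, Abar_row_sum_lt_one h1 h2 hs hws hwd _⟩⟩

/-- `A̅` is substochastic, with at least one row sum strictly less than one. -/
theorem stmt_4 (n1 n2 r1 r2 : ℕ) (hr1 : 1 ≤ r1) (hr2 : 1 ≤ r2)
    (h1 : r1 ≤ n1) (h2 : r2 ≤ n2) (hs : r1 + r2 < n1 + n2)
    (ws wd : ℝ) (hws : 0 < ws) (hwd : 0 < wd)
    (hnorm : ws * ((n1 : ℝ)^2 + (n2 : ℝ)^2) + 2 * wd * n1 * n2 = 1) :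
    (∀ k l, 0 ≤ Abar n1 n2 r1 r2 ws wd k l) ∧
    (∀ k, ∑ l, Abar n1 n2 r1 r2 ws wd k l ≤ 1) ∧
    (∃ k, ∑ l, Abar n1 n2 r1 r2 ws wd k l < 1) :=
  stmt_4_general n1 n2 r1 r2 hr1 h1 h2 hs ws wd hws hwd hnorm
end

section
/- With γ11, γ12, γ21, γ22, δ as defined (s1 = n1 - r1 > 0, s2 = n2 - r2 > 0, w_s, w_d > 0), let χ1 = (γ11 S1 + γ12 S2)/δ and χ2 = (γ21 S2 + γ22 S1)/δ, where S1 and S2 are the sums of the stubborn agents' fixed states in communities 1 and 2 respectively. Then χ1 ≠ χ2 if and only if S1/s1 ≠ S2/s2, under the additional assumption w_s ≠ w_d. -/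
/-- Identifiability: `χ1 ≠ χ2` iff the averages of stubborn states in the two
communities differ, `S1/s1 ≠ S2/s2`. -/
theorem stmt_8 (n1 n2 r1 r2 : ℕ) (h1 : r1 < n1) (h2 : r2 < n2)
    (ws wd : ℝ) (hws : 0 < ws) (hwd : 0 < wd) (hne : ws ≠ wd) (S1 S2 : ℝ) :
    let s1 : ℝ := (n1 : ℝ) - r1
    let s2 : ℝ := (n2 : ℝ) - r2
    let γ11 : ℝ := ws * wd * n1 + wd ^ 2 * r2 + ws ^ 2 * s2
    let γ12 : ℝ := wd * (wd * n1 + ws * n2)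
    let γ21 : ℝ := ws * wd * n2 + wd ^ 2 * r1 + ws ^ 2 * s1
    let γ22 : ℝ := wd * (wd * n2 + ws * n1)
    let δ : ℝ := ws ^ 2 * s1 * s2 + ws * wd * ((n1 : ℝ) * s1 + n2 * s2) +
      wd ^ 2 * ((n1 : ℝ) * n2 - r1 * r2)
    let χ1 : ℝ := (γ11 * S1 + γ12 * S2) / δ
    let χ2 : ℝ := (γ21 * S2 + γ22 * S1) / δ
    (χ1 ≠ χ2 ↔ S1 / s1 ≠ S2 / s2) := by
  intro s1 s2 γ11 γ12 γ21 γ22 δ χ1 χ2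
  have hr1 : (r1 : ℝ) < n1 := by exact_mod_cast h1
  have hr2 : (r2 : ℝ) < n2 := by exact_mod_cast h2
  have hr1' : (0 : ℝ) ≤ r1 := Nat.cast_nonneg _
  have hr2' : (0 : ℝ) ≤ r2 := Nat.cast_nonneg _
  have hs1 : (0 : ℝ) < s1 := by simp only [s1]; linarith
  have hs2 : (0 : ℝ) < s2 := by simp only [s2]; linarith
  have hδ : (0 : ℝ) < δ := by
    have hnn : (0:ℝ) < (n1:ℝ) * n2 - r1 * r2 := by nlinarith
    have : (0:ℝ) ≤ (n1:ℝ) * s1 + n2 * s2 := by nlinarith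
    simp only [δ]
    have h1' : 0 < ws ^ 2 * s1 * s2 := by positivity
    have h2' : 0 ≤ ws * wd * ((n1 : ℝ) * s1 + n2 * s2) := by positivity
    have h3' : 0 < wd ^ 2 * ((n1 : ℝ) * n2 - r1 * r2) := by positivity
    linarith
  have hδ0 : δ ≠ 0 := ne_of_gt hδ
  have hsq : ws ^ 2 - wd ^ 2 ≠ 0 := by
    intro h
    have : (ws - wd) * (ws + wd) = 0 := by ring_nf; linarith
    rcases mul_eq_zero.mp this with h' | h'
    · exact hne (by linarith)
    · linarith
  rw [not_iff_not, div_eq_div_iff (ne_of_gt hs1) (ne_of_gt hs2)]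
  constructor
  · intro h
    have h' : (ws ^ 2 - wd ^ 2) * (S1 * s2 - S2 * s1) * δ = 0 := by
      have := div_eq_div_iff hδ0 hδ0 |>.mp h
      simp only [γ11, γ12, γ21, γ22, δ, s1, s2] at this ⊢
      linear_combination this
    rcases mul_eq_zero.mp h' with h'' | h''
    · rcases mul_eq_zero.mp h'' with h3 | h3
      · exact absurd h3 hsq
      · linarith [sub_eq_zero.mp h3]
    · exact absurd h'' hδ0
  · intro h
    simp only [χ1, χ2]
    rw [div_eq_div_iff hδ0 hδ0]
    simp only [γ11, γ12, γ21, γ22, δ, s1, s2] at h ⊢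
    linear_combination (ws ^ 2 - wd ^ 2) * (ws ^ 2 * ((n1:ℝ)-r1) * ((n2:ℝ)-r2) + ws * wd * ((n1 : ℝ) * ((n1:ℝ)-r1) + n2 * ((n2:ℝ)-r2)) + wd ^ 2 * ((n1 : ℝ) * n2 - r1 * r2)) * h
end

section
/- Let x^r = (I - A̅)^{-1} B̅ x^s for the block gossip model with B̅ = [[w_s J_{r1,s1}, w_d J_{r1,s2}],[w_d J_{r2,s1}, w_s J_{r2,s2}]] and (I - A̅)^{-1} of the block form in Theorem 3. Then x^r = [χ1·1_{r1}; χ2·1_{r2}] for some scalars χ1, χ2: the expected stationary states of all regular agents in the same community are identical. -/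
open Matrix BigOperators

/-- A generic two-community block matrix on the regular agents. -/
def blk (r1 r2 : ℕ) (d1 o1 off d2 o2 : ℝ) :
    Matrix (Fin (r1 + r2)) (Fin (r1 + r2)) ℝ :=
  fun k l =>
    if (k : ℕ) < r1 then
      if (l : ℕ) < r1 then (if k = l then d1 else 0) + o1
      else off
    else
      if (l : ℕ) < r1 then off
      else (if k = l then d2 else 0) + o2

/-- The expected stubborn-influence matrix `B̅`. -/
def Bbar (r1 r2 s1 s2 : ℕ) (ws wd : ℝ) :
    Matrix (Fin (r1 + r2)) (Fin (s1 + s2)) ℝ :=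
  fun k l => if (((k : ℕ) < r1) ↔ ((l : ℕ) < s1)) then ws else wd

lemma row_sum (r1 r2 : ℕ) (d1 o1 off d2 o2 b1 b2 : ℝ) (k : Fin (r1 + r2)) :
    ∑ j : Fin (r1 + r2), blk r1 r2 d1 o1 off d2 o2 k j *
      (if (j : ℕ) < r1 then b1 else b2) =
    if (k : ℕ) < r1 then (d1 + r1 * o1) * b1 + (r2 * off) * b2
    else (r1 * off) * b1 + (d2 + r2 * o2) * b2 := by
  rw [Fin.sum_univ_add]
  have e1 : ∀ x : Fin r1, (if ((Fin.castAdd r2 x : Fin (r1+r2)) : ℕ) < r1 then b1 else b2) = b1 := by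
    intro x; simp [x.isLt]
  have e2 : ∀ x : Fin r2, (if ((Fin.natAdd r1 x : Fin (r1+r2)) : ℕ) < r1 then b1 else b2) = b2 := by
    intro x; simp only [Fin.coe_natAdd]; rw [if_neg]; omega
  by_cases hk : (k : ℕ) < r1
  · have h1 : ∀ i : Fin r1,
        blk r1 r2 d1 o1 off d2 o2 k (Fin.castAdd r2 i) =
          (if i = ⟨(k : ℕ), hk⟩ then d1 else 0) + o1 := by
      intro i
      simp only [blk, hk, if_true, Fin.coe_castAdd, i.isLt, if_true]
      congr 2
      simp [Fin.ext_iff, eq_comm]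
    have h2 : ∀ i : Fin r2,
        blk r1 r2 d1 o1 off d2 o2 k (Fin.natAdd r1 i) = off := by
      intro i
      simp [blk, hk, Nat.not_lt.2 (Nat.le_add_right r1 i)]
    simp only [h1, h2, hk, if_true, e1, e2]
    rw [Finset.sum_const, Finset.card_univ, Fintype.card_fin]
    have : ∑ i : Fin r1, ((if i = ⟨(k : ℕ), hk⟩ then d1 else 0) + o1) * b1
        = (d1 + r1 * o1) * b1 := by
      rw [Finset.sum_congr rfl (fun i _ => add_mul _ _ _), Finset.sum_add_distrib,
        ← Finset.sum_mul, Finset.sum_ite_eq' Finset.univ (⟨(k : ℕ), hk⟩ : Fin r1)]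
      simp [Finset.sum_const, Finset.card_univ]
      ring
    rw [this]
    ring_nf
  · have h1 : ∀ i : Fin r1,
        blk r1 r2 d1 o1 off d2 o2 k (Fin.castAdd r2 i) = off := by
      intro i
      simp [blk, hk, i.isLt]
    have hk' : r1 ≤ (k : ℕ) := Nat.not_lt.1 hk
    have h2 : ∀ i : Fin r2,
        blk r1 r2 d1 o1 off d2 o2 k (Fin.natAdd r1 i) =
          (if i = ⟨(k : ℕ) - r1, by have := k.isLt; omega⟩ then d2 else 0) + o2 := by
      intro i
      simp only [blk, hk, if_false, Fin.coe_natAdd,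
        Nat.not_lt.2 (Nat.le_add_right r1 i), if_false]
      have hcond : (k = Fin.natAdd r1 i) =
          (i = (⟨(k : ℕ) - r1, by have := k.isLt; omega⟩ : Fin r2)) := by
        apply propext
        rw [Fin.ext_iff, Fin.ext_iff]
        simp only [Fin.coe_natAdd]
        omega
      exact congrArg (· + o2) (if_congr (iff_of_eq hcond) rfl rfl)
    simp only [h1, h2, hk, if_false, e1, e2]
    rw [Finset.sum_const, Finset.card_univ, Fintype.card_fin]
    have : ∑ i : Fin r2, ((if i = ⟨(k : ℕ) - r1, by have := k.isLt; omega⟩ then d2 else 0) + o2) * b2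
        = (d2 + r2 * o2) * b2 := by
      rw [Finset.sum_congr rfl (fun i _ => add_mul _ _ _), Finset.sum_add_distrib,
        ← Finset.sum_mul, Finset.sum_ite_eq' Finset.univ]
      simp [Finset.sum_const, Finset.card_univ]
      ring
    rw [this]
    ring_nf

lemma bbar_eq (r1 r2 s1 s2 : ℕ) (ws wd : ℝ) (j : Fin (r1 + r2)) (l : Fin (s1 + s2)) :
    Bbar r1 r2 s1 s2 ws wd j l =
      if (j : ℕ) < r1 then (if (l : ℕ) < s1 then ws else wd)
      else (if (l : ℕ) < s1 then wd else ws) := by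
  unfold Bbar
  by_cases h1 : (j : ℕ) < r1 <;> by_cases h2 : (l : ℕ) < s1 <;> simp [h1, h2]

/-- With `(I - A̅)⁻¹` of the block form of Theorem 3, the expected stationary state
`x^r = (I - A̅)⁻¹ B̅ x^s` is constant on each community. -/
theorem stmt_10 (r1 r2 s1 s2 : ℕ) (hr1 : 1 ≤ r1) (hr2 : 1 ≤ r2) (hs : 1 ≤ s1 + s2)
    (ws wd a1 a2 ws1 ws2 wdt : ℝ) (xs : Fin (s1 + s2) → ℝ) :
    let Minv : Matrix (Fin (r1 + r2)) (Fin (r1 + r2)) ℝ :=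
      blk r1 r2 (1 / a1) (-(ws1 / a1)) wdt (1 / a2) (-(ws2 / a2))
    ∃ χ1 χ2 : ℝ, ∀ k : Fin (r1 + r2),
      (Minv * Bbar r1 r2 s1 s2 ws wd).mulVec xs k =
        if (k : ℕ) < r1 then χ1 else χ2 := by
  intro Minv
  refine ⟨∑ l : Fin (s1 + s2),
      (((1 / a1) + r1 * (-(ws1 / a1))) * (if (l : ℕ) < s1 then ws else wd)
        + (r2 * wdt) * (if (l : ℕ) < s1 then wd else ws)) * xs l,
    ∑ l : Fin (s1 + s2),
      ((r1 * wdt) * (if (l : ℕ) < s1 then ws else wd)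
        + ((1 / a2) + r2 * (-(ws2 / a2))) * (if (l : ℕ) < s1 then wd else ws)) * xs l,
    fun k => ?_⟩
  have key : ∀ l : Fin (s1 + s2),
      ∑ j : Fin (r1 + r2), Minv k j * Bbar r1 r2 s1 s2 ws wd j l =
      if (k : ℕ) < r1 then
        (((1 / a1) + r1 * (-(ws1 / a1))) * (if (l : ℕ) < s1 then ws else wd)
          + (r2 * wdt) * (if (l : ℕ) < s1 then wd else ws))
      else ((r1 * wdt) * (if (l : ℕ) < s1 then ws else wd)
          + ((1 / a2) + r2 * (-(ws2 / a2))) * (if (l : ℕ) < s1 then wd else ws)) := by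
    intro l
    simp only [bbar_eq]
    exact row_sum r1 r2 (1 / a1) (-(ws1 / a1)) wdt (1 / a2) (-(ws2 / a2))
      (if (l : ℕ) < s1 then ws else wd) (if (l : ℕ) < s1 then wd else ws) k
  simp only [Matrix.mulVec, Matrix.mul_apply, dotProduct, key]
  by_cases hk : (k : ℕ) < r1 <;> simp [hk]
end
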